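/- arXiv:2402.15446 — 2 statements merged into one kernel-verified Lean document; each statement's English description precedes it below -/
import Mathlib

section
/- For any reals λ₀ > 0 and λ₁ ≥ 0, any state U₀ ∈ 𝒢 and any state U₁ ∈ 𝒢̄, the state λ₀U₀ + λ₁U₁ (componentwise operations) belongs to 𝒢. -/
/-!
For `ρ > 0`, completing the square in `u ⬝ᵥ z` gives
`2 φ(U; z, u) = zᵀ p(U) z + ρ⁻¹ (ρ (u ⬝ᵥ z) - m ⬝ᵥ z)²`, and `u ⬝ᵥ z` can take any value when
`z ≠ 0`. Hence `U ∈ 𝒢` iff `E` is symmetric and `φ(U; z, u) > 0` for all `z ≠ 0` and all `u`.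
Both conditions are preserved by `λ₀U₀ + λ₁U₁`, because `φ` is linear in `U`.
-/

open Matrix

noncomputable section

/-- A state is a triple `(ρ, m, E)` with `ρ : ℝ`, `m : ℝ²`, `E` a 2×2 real matrix. -/
abbrev Mat2 := Matrix (Fin 2) (Fin 2) ℝ

/-- The pressure tensor `p(U) = 2E - (1/ρ) m mᵀ`. -/
def pTensor (ρ : ℝ) (m : Fin 2 → ℝ) (E : Mat2) : Mat2 :=
  (2 : ℝ) • E - ρ⁻¹ • vecMulVec m m

/-- `φ(U; z, u*) = zᵀEz − (m·z)(u*·z) + (ρ/2)(u*·z)²`. -/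
def phi (ρ : ℝ) (m : Fin 2 → ℝ) (E : Mat2) (z u : Fin 2 → ℝ) : ℝ :=
  z ⬝ᵥ (E *ᵥ z) - (m ⬝ᵥ z) * (u ⬝ᵥ z) + (ρ / 2) * (u ⬝ᵥ z) ^ 2

/-- The admissible set `𝒢`: states with positive density and positive definite pressure tensor. -/
def G : Set (ℝ × (Fin 2 → ℝ) × Mat2) :=
  {U | 0 < U.1 ∧ (pTensor U.1 U.2.1 U.2.2).PosDef}

/-- The closed admissible set `𝒢̄`: states (so `E` symmetric) with `ρ ≥ 0` and
`φ(U; z, u*) ≥ 0` for all `z, u*`. -/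
def Gbar : Set (ℝ × (Fin 2 → ℝ) × Mat2) :=
  {U | 0 ≤ U.1 ∧ U.2.2.IsSymm ∧ ∀ z u : Fin 2 → ℝ, 0 ≤ phi U.1 U.2.1 U.2.2 z u}

theorem Matrix.exists_dotProduct_eq {n K : Type*} [Fintype n] [DecidableEq n] [Field K]
    {z : n → K} (hz : z ≠ 0) (s : K) : ∃ u : n → K, u ⬝ᵥ z = s := by
  obtain ⟨i, hi⟩ := Function.ne_iff.mp hz
  exact ⟨Pi.single i (s / z i), by simp [single_dotProduct, div_mul_cancel₀ s hi]⟩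

lemma isSymm_pTensor_iff {ρ : ℝ} {m : Fin 2 → ℝ} {E : Mat2} :
    (pTensor ρ m E).IsSymm ↔ E.IsSymm := by
  have hV : (ρ⁻¹ • vecMulVec m m).IsSymm := by
    simp [Matrix.IsSymm, transpose_vecMulVec]
  refine ⟨fun h => ?_, fun h => (h.smul 2).sub hV⟩
  have h2E : ((2 : ℝ) • E).IsSymm := by simpa [pTensor] using h.add hV
  simpa using h2E.smul (2⁻¹ : ℝ)

lemma dotProduct_pTensor_mulVec (ρ : ℝ) (m : Fin 2 → ℝ) (E : Mat2) (z : Fin 2 → ℝ) :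
    z ⬝ᵥ (pTensor ρ m E *ᵥ z) = 2 * (z ⬝ᵥ (E *ᵥ z)) - ρ⁻¹ * (m ⬝ᵥ z) ^ 2 := by
  simp only [pTensor, sub_mulVec, smul_mulVec, vecMulVec_mulVec, op_smul_eq_smul,
    dotProduct_sub, dotProduct_smul, smul_eq_mul, dotProduct_comm z m]
  ring

lemma two_mul_phi {ρ : ℝ} (hρ : ρ ≠ 0) (m : Fin 2 → ℝ) (E : Mat2) (z u : Fin 2 → ℝ) :
    2 * phi ρ m E z u =
      z ⬝ᵥ (pTensor ρ m E *ᵥ z) + ρ⁻¹ * (ρ * (u ⬝ᵥ z) - m ⬝ᵥ z) ^ 2 := by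
  rw [dotProduct_pTensor_mulVec, phi]
  field_simp
  ring

lemma phi_add_smul (a b : ℝ) (ρ₀ ρ₁ : ℝ) (m₀ m₁ : Fin 2 → ℝ) (E₀ E₁ : Mat2) (z u : Fin 2 → ℝ) :
    phi (a * ρ₀ + b * ρ₁) (a • m₀ + b • m₁) (a • E₀ + b • E₁) z u =
      a * phi ρ₀ m₀ E₀ z u + b * phi ρ₁ m₁ E₁ z u := by
  simp only [phi, add_mulVec, smul_mulVec, dotProduct_add, add_dotProduct, dotProduct_smul,
    smul_dotProduct, smul_eq_mul]
  ring

lemma mem_G_iff_phi_pos {ρ : ℝ} (hρ : 0 < ρ) {m : Fin 2 → ℝ} {E : Mat2} :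
    (ρ, m, E) ∈ G ↔ E.IsSymm ∧ ∀ z ≠ 0, ∀ u, 0 < phi ρ m E z u := by
  simp only [G, Set.mem_ofPred_eq, hρ, true_and, posDef_iff_dotProduct_mulVec,
    isHermitian_iff_isSymm, isSymm_pTensor_iff, star_trivial]
  refine and_congr_right fun _ => forall₂_congr fun z hz => ⟨fun hp u => ?_, fun hφ => ?_⟩
  · have h := two_mul_phi hρ.ne' m E z u
    have : 0 ≤ ρ⁻¹ * (ρ * (u ⬝ᵥ z) - m ⬝ᵥ z) ^ 2 := by positivity
    linarith
  · obtain ⟨u, hu⟩ := exists_dotProduct_eq hz (m ⬝ᵥ z / ρ)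
    have h := two_mul_phi hρ.ne' m E z u
    rw [hu, mul_div_cancel₀ _ hρ.ne', sub_self, zero_pow two_ne_zero, mul_zero, add_zero] at h
    linarith [hφ u]

/-- For `λ₀ > 0`, `λ₁ ≥ 0`, `U₀ ∈ 𝒢` and `U₁ ∈ 𝒢̄`, one has `λ₀U₀ + λ₁U₁ ∈ 𝒢`. -/
theorem combination_mem_admissible (lam0 lam1 : ℝ) (h0 : 0 < lam0) (h1 : 0 ≤ lam1)
    (U0 U1 : ℝ × (Fin 2 → ℝ) × Mat2) (hU0 : U0 ∈ G) (hU1 : U1 ∈ Gbar) :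
    lam0 • U0 + lam1 • U1 ∈ G := by
  obtain ⟨ρ₀, m₀, E₀⟩ := U0
  obtain ⟨ρ₁, m₁, E₁⟩ := U1
  obtain ⟨hE₀, hφ₀⟩ := (mem_G_iff_phi_pos hU0.1).mp hU0
  obtain ⟨hρ₁, hE₁, hφ₁⟩ := hU1
  simp only [Prod.smul_mk, Prod.mk_add_mk, smul_eq_mul]
  have hρ : 0 < lam0 * ρ₀ + lam1 * ρ₁ :=
    add_pos_of_pos_of_nonneg (mul_pos h0 hU0.1) (mul_nonneg h1 hρ₁)
  rw [mem_G_iff_phi_pos hρ]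
  refine ⟨(hE₀.smul lam0).add (hE₁.smul lam1), fun z hz u => ?_⟩
  rw [phi_add_smul]
  exact add_pos_of_pos_of_nonneg (mul_pos h0 (hφ₀ z hz u)) (mul_nonneg h1 (hφ₁ z u))
end
end

section
/- For every state U = (ρ, m, E) ∈ 𝒢, every u* ∈ ℝ² and every z ∈ ℝ² with z ≠ 0, one has |φ(S₁(U); z, u*)| ≤ δ₁(U)·φ(U; z, u*) and |φ(S₂(U); z, u*)| ≤ δ₂(U)·φ(U; z, u*), where S₁(U) := (0, (ρ, 0), [[m₁, m₂/2],[m₂/2, 0]]), δ₁(U) := max{√(ρ/p₁₁), √(ρ p₂₂/det(p))}, S₂(U) := (0, (0, ρ), [[0, m₁/2],[m₁/2, m₂]]), and δ₂(U) := max{√(ρ/p₂₂), √(ρ p₁₁/det(p))}, with p = p(U). -/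
/-!
Completing the square, `φ(U; z, u*) = ½ zᵀ p z + w² / (2ρ)` with `w = m·z − ρ (u*·z)`, while
`φ(S₁(U); z, u*) = z₁ w` and `φ(S₂(U); z, u*) = z₂ w`. For a symmetric 2×2 matrix,
`p₂₂ zᵀ p z = det p · z₁² + (p₁₂ z₁ + p₂₂ z₂)²`, so `ρ z₁² ≤ (ρ p₂₂ / det p) zᵀ p z`, and the
AM-GM inequality turns this into `|z₁ w| ≤ √(ρ p₂₂ / det p) · φ(U; z, u*)`; symmetrically for `z₂`.
Only the second entry of each maximum is needed.
-/

open Matrix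

noncomputable section

theorem abs_mul_le_sqrt_mul_add {ρ c a w q : ℝ} (hρ : 0 < ρ) (hc : 0 ≤ c)
    (h : ρ * a ^ 2 ≤ c * q) : |a * w| ≤ √c * (q / 2 + w ^ 2 / (2 * ρ)) := by
  rcases hc.eq_or_lt with rfl | hc
  · have ha : a ^ 2 = 0 := le_antisymm (by nlinarith) (sq_nonneg a)
    simp [pow_eq_zero_iff two_ne_zero |>.mp ha]
  have hs : 0 < √c := Real.sqrt_pos.mpr hc
  have hsq : √c ^ 2 = c := Real.sq_sqrt hc.le
  have hrhs : √c * (q / 2 + w ^ 2 / (2 * ρ)) = √c * (ρ * q + w ^ 2) / (2 * ρ) := by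
    field_simp
  rw [hrhs, le_div_iff₀ (by positivity), abs_mul, ← mul_le_mul_iff_right₀ hs]
  calc √c * (|a| * |w| * (2 * ρ)) = 2 * (ρ * |a|) * (√c * |w|) := by ring
    _ ≤ (ρ * |a|) ^ 2 + (√c * |w|) ^ 2 := two_mul_le_add_sq _ _
    _ = ρ * (ρ * a ^ 2) + c * w ^ 2 := by
      rw [mul_pow, mul_pow, sq_abs, sq_abs]; linear_combination w ^ 2 * hsq
    _ ≤ ρ * (c * q) + c * w ^ 2 := by gcongr
    _ = √c * (√c * (ρ * q + w ^ 2)) := by linear_combination (-(ρ * q + w ^ 2)) * hsq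

namespace Matrix

variable {R : Type*} [CommRing R] [LinearOrder R] [IsStrictOrderedRing R]

theorem det_mul_sq_zero_le_mul_dotProduct_mulVec {p : Matrix (Fin 2) (Fin 2) R} (hp : p.IsSymm)
    (z : Fin 2 → R) :
    p.det * z 0 ^ 2 ≤ p 1 1 * (z ⬝ᵥ p *ᵥ z) := by
  have h10 : p 1 0 = p 0 1 := by simpa using congrFun (congrFun hp 0) 1
  have key : p 1 1 * (z ⬝ᵥ p *ᵥ z) = p.det * z 0 ^ 2 + (p 0 1 * z 0 + p 1 1 * z 1) ^ 2 := by
    simp only [det_fin_two, dotProduct, mulVec, Fin.sum_univ_two, h10]; ring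
  rw [key]; exact le_add_of_nonneg_right (sq_nonneg _)

theorem det_mul_sq_one_le_mul_dotProduct_mulVec {p : Matrix (Fin 2) (Fin 2) R} (hp : p.IsSymm)
    (z : Fin 2 → R) :
    p.det * z 1 ^ 2 ≤ p 0 0 * (z ⬝ᵥ p *ᵥ z) := by
  have h10 : p 1 0 = p 0 1 := by simpa using congrFun (congrFun hp 0) 1
  have key : p 0 0 * (z ⬝ᵥ p *ᵥ z) = p.det * z 1 ^ 2 + (p 0 0 * z 0 + p 0 1 * z 1) ^ 2 := by
    simp only [det_fin_two, dotProduct, mulVec, Fin.sum_univ_two, h10]; ring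
  rw [key]; exact le_add_of_nonneg_right (sq_nonneg _)

end Matrix

theorem phi_eq_pTensor {ρ : ℝ} (hρ : ρ ≠ 0) (m : Fin 2 → ℝ) (E : Mat2) (z u : Fin 2 → ℝ) :
    phi ρ m E z u =
      z ⬝ᵥ pTensor ρ m E *ᵥ z / 2 + (m ⬝ᵥ z - ρ * u ⬝ᵥ z) ^ 2 / (2 * ρ) := by
  simp only [phi, pTensor, sub_mulVec, smul_mulVec, vecMulVec_mulVec, dotProduct_sub,
    dotProduct_smul, smul_eq_mul]
  rw [op_smul_eq_mul, dotProduct_comm z m]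
  field_simp
  ring

theorem phi_nonneg_of_mem_G {ρ : ℝ} {m : Fin 2 → ℝ} {E : Mat2} (hU : (ρ, m, E) ∈ G)
    (z u : Fin 2 → ℝ) : 0 ≤ phi ρ m E z u := by
  obtain ⟨hρ, hp⟩ := hU
  have hq : 0 ≤ z ⬝ᵥ pTensor ρ m E *ᵥ z := by
    simpa using hp.posSemidef.dotProduct_mulVec_nonneg z
  rw [phi_eq_pTensor hρ.ne']
  positivity

theorem abs_mul_le_sqrt_mul_phi {ρ d b a : ℝ} {m : Fin 2 → ℝ} {E : Mat2} {z : Fin 2 → ℝ}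
    (hρ : 0 < ρ) (hd : 0 < d) (hb : 0 ≤ b) (h : d * a ^ 2 ≤ b * (z ⬝ᵥ pTensor ρ m E *ᵥ z))
    (u : Fin 2 → ℝ) : |a * (m ⬝ᵥ z - ρ * u ⬝ᵥ z)| ≤ √(ρ * b / d) * phi ρ m E z u := by
  rw [phi_eq_pTensor hρ.ne']
  refine abs_mul_le_sqrt_mul_add hρ (by positivity) ?_
  rw [div_mul_eq_mul_div, le_div_iff₀ hd]
  linear_combination ρ * h

theorem phi_first_source_eq (ρ : ℝ) (m z u : Fin 2 → ℝ) :
    phi 0 ![ρ, 0] !![m 0, m 1 / 2; m 1 / 2, 0] z u = z 0 * (m ⬝ᵥ z - ρ * u ⬝ᵥ z) := by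
  simp only [phi, dotProduct, mulVec, Fin.sum_univ_two, of_apply, cons_val', cons_val_fin_one,
    cons_val_zero, cons_val_one, zero_mul, add_zero, zero_div]
  ring

theorem phi_second_source_eq (ρ : ℝ) (m z u : Fin 2 → ℝ) :
    phi 0 ![0, ρ] !![0, m 0 / 2; m 0 / 2, m 1] z u = z 1 * (m ⬝ᵥ z - ρ * u ⬝ᵥ z) := by
  simp only [phi, dotProduct, mulVec, Fin.sum_univ_two, of_apply, cons_val', cons_val_fin_one,
    cons_val_zero, cons_val_one, zero_mul, zero_add, add_zero, zero_div]
  ring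

theorem phi_source_bound_general (ρ : ℝ) (m : Fin 2 → ℝ) (E : Mat2) (hU : (ρ, m, E) ∈ G)
    (u z : Fin 2 → ℝ) :
    |phi 0 ![ρ, 0] !![m 0, m 1 / 2; m 1 / 2, 0] z u| ≤
      max (Real.sqrt (ρ / (pTensor ρ m E) 0 0))
          (Real.sqrt (ρ * (pTensor ρ m E) 1 1 / (pTensor ρ m E).det)) *
        phi ρ m E z u ∧
    |phi 0 ![0, ρ] !![0, m 0 / 2; m 0 / 2, m 1] z u| ≤
      max (Real.sqrt (ρ / (pTensor ρ m E) 1 1))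
          (Real.sqrt (ρ * (pTensor ρ m E) 0 0 / (pTensor ρ m E).det)) *
        phi ρ m E z u := by
  have hφ : 0 ≤ phi ρ m E z u := phi_nonneg_of_mem_G hU z u
  obtain ⟨hρ, hp⟩ := hU
  have hsymm : (pTensor ρ m E).IsSymm := isHermitian_iff_isSymm.mp hp.isHermitian
  rw [phi_first_source_eq, phi_second_source_eq]
  constructor
  · refine (abs_mul_le_sqrt_mul_phi hρ hp.det_pos hp.diag_pos.le
      (det_mul_sq_zero_le_mul_dotProduct_mulVec hsymm z) u).trans ?_
    exact mul_le_mul_of_nonneg_right (le_max_right _ _) hφ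
  · refine (abs_mul_le_sqrt_mul_phi hρ hp.det_pos hp.diag_pos.le
      (det_mul_sq_one_le_mul_dotProduct_mulVec hsymm z) u).trans ?_
    exact mul_le_mul_of_nonneg_right (le_max_right _ _) hφ

/-- Corollary 2.1 of the paper: `|φ(Sᵢ(U); z, u*)| ≤ δᵢ(U) φ(U; z, u*)` for `U ∈ 𝒢`. -/
theorem phi_source_bound (ρ : ℝ) (m : Fin 2 → ℝ) (E : Mat2) (hU : (ρ, m, E) ∈ G)
    (u z : Fin 2 → ℝ) (hz : z ≠ 0) :
    |phi 0 ![ρ, 0] !![m 0, m 1 / 2; m 1 / 2, 0] z u| ≤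
      max (Real.sqrt (ρ / (pTensor ρ m E) 0 0))
          (Real.sqrt (ρ * (pTensor ρ m E) 1 1 / (pTensor ρ m E).det)) *
        phi ρ m E z u ∧
    |phi 0 ![0, ρ] !![0, m 0 / 2; m 0 / 2, m 1] z u| ≤
      max (Real.sqrt (ρ / (pTensor ρ m E) 1 1))
          (Real.sqrt (ρ * (pTensor ρ m E) 0 0 / (pTensor ρ m E).det)) *
        phi ρ m E z u :=
  phi_source_bound_general ρ m E hU u z
end
end
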